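/- arXiv:2410.13426 — 2 statements merged into one kernel-verified Lean document; each statement's English description precedes it below -/
import Mathlib

section
/- As a consequence of the Solov'ev–Nielsen–Blom formula: for a word w of length n ≥ 1 with bifix chain w = u₀ ⊋ u₁ ⊋ ⋯ ⊋ u_k = ∅ (each u_{i+1} the longest bifix of u_i), the expected waiting time is E(w) = Σ_{i=0}^{k−1} p(u_i)^{-1}. -/
open MeasureTheory ENNReal

/-- `w` occurs as a factor (contiguous subword) of the infinite word `ξ`. -/
def occursIn {r : ℕ} (w : List (Fin r)) (ξ : ℕ → Fin r) : Prop :=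
  ∃ i : ℕ, ∀ j : ℕ, (hj : j < w.length) → ξ (i + j) = w.get ⟨j, hj⟩

/-- The waiting time `T_w(ξ)`: the first time `k` at which `w` has just occurred,
i.e. `ξ[k-|w|+1, k] = w` (0-indexed: positions `k-|w|, …, k-1`); `∞` if `w` never occurs. -/
noncomputable def waitTime {r : ℕ} (w : List (Fin r)) (ξ : ℕ → Fin r) : ℝ≥0∞ :=
  sInf {t : ℝ≥0∞ | ∃ k : ℕ, t = k ∧ w.length ≤ k ∧
    ∀ j : ℕ, (hj : j < w.length) → ξ (k - w.length + j) = w.get ⟨j, hj⟩}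

/-- Expected waiting time `E(w)`. -/
noncomputable def Ew {r : ℕ} (μ : Measure (ℕ → Fin r)) (w : List (Fin r)) : ℝ≥0∞ :=
  ∫⁻ ξ, waitTime w ξ ∂μ

/-- The infinite word `w'ξ` obtained by prepending the finite word `w'` to `ξ`. -/
def prepend {r : ℕ} (w' : List (Fin r)) (ξ : ℕ → Fin r) : ℕ → Fin r :=
  fun n => if h : n < w'.length then w'.get ⟨n, h⟩ else ξ (n - w'.length)

/-- Conditional expected waiting time `E(u | w') = E[T_u(w'X)] − |w'|`. -/
noncomputable def condEw {r : ℕ} (μ : Measure (ℕ → Fin r)) (u w' : List (Fin r)) : ℝ≥0∞ :=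
  (∫⁻ ξ, waitTime u (prepend w' ξ) ∂μ) - w'.length

/-- `p(w) = ∏ᵢ p(w(i))`. -/
noncomputable def pword {r : ℕ} (p : Fin r → ℝ≥0∞) (w : List (Fin r)) : ℝ≥0∞ := (w.map p).prod

/-- `v` is a bifix of `w`: `v ≠ w` and `v` is both a prefix and a suffix of `w`. -/
def IsBifix {r : ℕ} (v w : List (Fin r)) : Prop := v ≠ w ∧ v <+: w ∧ v <:+ w

/-- `v` is the longest bifix of `w`. -/
def IsLongestBifix {r : ℕ} (v w : List (Fin r)) : Prop :=
  IsBifix v w ∧ ∀ v', IsBifix v' w → v'.length ≤ v.length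

namespace S12
variable {r : ℕ}

def Pat (m : ℕ) (s : List (Fin r)) : Set (ℕ → Fin r) :=
  {ξ | ∀ j : ℕ, (hj : j < s.length) → ξ (m + j) = s.get ⟨j, hj⟩}

lemma measurableSet_Pat (m : ℕ) (s : List (Fin r)) : MeasurableSet (Pat m s) := by
  have : Pat m s = ⋂ j : Fin s.length, {ξ : ℕ → Fin r | ξ (m + j) = s.get j} := by
    ext ξ; simp only [Pat, Set.mem_setOf_eq, Set.mem_iInter]
    constructor
    · intro h j; exact h j j.isLt
    · intro h j hj; exact h ⟨j, hj⟩
  rw [this]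
  exact MeasurableSet.iInter fun j =>
    (measurable_pi_apply (m + (j : ℕ))) (measurableSet_singleton _)

/-- A set is determined by coordinates `< m`. -/
def Det (m : ℕ) (A : Set (ℕ → Fin r)) : Prop :=
  ∀ ξ η : ℕ → Fin r, (∀ i < m, ξ i = η i) → ξ ∈ A → η ∈ A

lemma Det.mono {m m' : ℕ} {A : Set (ℕ → Fin r)} (h : Det m A) (hm : m ≤ m') : Det m' A :=
  fun ξ η hag => h ξ η (fun i hi => hag i (lt_of_lt_of_le hi hm))

lemma pword_eq_prod_range (p : Fin r → ℝ≥0∞) (s : List (Fin r)) :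
    pword p s = ∏ j : Fin s.length, p (s.get j) := by
  conv_lhs => rw [pword, ← List.ofFn_get s, List.map_ofFn, List.prod_ofFn]
  simp

section meas
variable (p : Fin r → ℝ≥0∞) (μ : Measure (ℕ → Fin r))
variable (hiid : ∀ (m : ℕ) (f : ℕ → Fin r),
      μ {ξ | ∀ i < m, ξ i = f i} = ∏ i ∈ Finset.range m, p (f i))
variable (hr : 0 < r)

/-- extension of a finite word to an infinite one -/
def ext (hr : 0 < r) (m : ℕ) (f : Fin m → Fin r) : ℕ → Fin r :=
  fun i => if h : i < m then f ⟨i, h⟩ else ⟨0, hr⟩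

def Cyl (hr : 0 < r) (m : ℕ) (f : Fin m → Fin r) : Set (ℕ → Fin r) :=
  {ξ | ∀ i < m, ξ i = ext hr m f i}

include hr in
lemma measurableSet_Cyl (m : ℕ) (f : Fin m → Fin r) : MeasurableSet (Cyl hr m f) := by
  have : Cyl hr m f = ⋂ i, ⋂ (_ : i < m), {ξ : ℕ → Fin r | ξ i = ext hr m f i} := by
    ext ξ; simp [Cyl]
  rw [this]
  exact MeasurableSet.iInter fun i => MeasurableSet.iInter fun _ =>
    (measurable_pi_apply i) (measurableSet_singleton _)

include hiid hr in
/-- The workhorse: a set determined by coordinates `< m`, intersected with a pattern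
starting at `m`, has measure `μ A * pword p s`. -/
lemma meas_inter_Pat (m : ℕ) (A : Set (ℕ → Fin r)) (hA : Det m A) (s : List (Fin r)) :
    μ (A ∩ Pat m s) = μ A * pword p s := by
  classical
  set F : Finset (Fin m → Fin r) := Finset.univ.filter (fun f => ext hr m f ∈ A) with hF
  -- A is the disjoint union of the cylinders indexed by F
  have hmem : ∀ ξ : ℕ → Fin r, ∀ f : Fin m → Fin r,
      ξ ∈ Cyl hr m f ↔ ∀ i : Fin m, ξ i = f i := by
    intro ξ f
    constructor
    · intro h i
      have := h i i.isLt
      simpa [ext, i.isLt] using this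
    · intro h i hi
      have := h ⟨i, hi⟩
      simpa [ext, hi] using this
  have hAU : A = ⋃ f ∈ F, Cyl hr m f := by
    ext ξ; constructor
    · intro hξ
      refine Set.mem_iUnion₂.mpr ⟨fun i : Fin m => ξ i, ?_, ?_⟩
      · simp only [hF, Finset.mem_filter, Finset.mem_univ, true_and]
        exact hA ξ _ (fun i hi => by simp [ext, hi]) hξ
      · rw [hmem]; intro i; rfl
    · intro hξ
      obtain ⟨f, hf, hξf⟩ := Set.mem_iUnion₂.mp hξ
      simp only [hF, Finset.mem_filter, Finset.mem_univ, true_and] at hf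
      refine hA _ ξ (fun i hi => ?_) hf
      have := (hmem ξ f).mp hξf ⟨i, hi⟩
      simp [ext, hi, this]
  have hdisj : (F : Set (Fin m → Fin r)).PairwiseDisjoint (Cyl hr m (r := r)) := by
    intro f _ g _ hfg
    refine Set.disjoint_left.mpr (fun ξ hf hg => hfg ?_)
    funext i
    rw [← (hmem ξ f).mp hf i, ← (hmem ξ g).mp hg i]
  -- measure of a cylinder intersected with the pattern
  have key : ∀ f ∈ F, μ (Cyl hr m f ∩ Pat m s) = μ (Cyl hr m f) * pword p s := by
    intro f _
    have hset : Cyl hr m f ∩ Pat m s =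
        {ξ : ℕ → Fin r | ∀ i < m + s.length, ξ i =
          (fun i => if h : i < m then ext hr m f i else
            if h2 : i - m < s.length then s.get ⟨i - m, h2⟩ else ⟨0, hr⟩) i} := by
      ext ξ
      simp only [Cyl, Pat, Set.mem_inter_iff, Set.mem_setOf_eq]
      constructor
      · rintro ⟨h1, h2⟩ i hi
        by_cases h : i < m
        · simp only [h, dif_pos]; exact h1 i h
        · have hs : i - m < s.length := by omega
          simp only [h, dif_neg, not_false_iff, hs, dif_pos]
          have := h2 (i - m) hs
          rwa [(by omega : m + (i - m) = i)] at this
      · intro h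
        constructor
        · intro i hi
          have := h i (by omega)
          simpa [hi] using this
        · intro j hj
          have := h (m + j) (by omega)
          rw [dif_neg (by omega : ¬ (m + j < m))] at this
          simpa [(by omega : m + j - m = j), hj] using this
    have hcyl : μ (Cyl hr m f) = ∏ i ∈ Finset.range m, p (ext hr m f i) :=
      hiid m (ext hr m f)
    rw [hset, hiid]
    rw [Finset.prod_range_add]
    congr 1
    · rw [hcyl]
      exact Finset.prod_congr rfl (fun i hi => by
          simp only [Finset.mem_range] at hi
          simp [hi])
    · rw [pword_eq_prod_range, ← Fin.prod_univ_eq_prod_range]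
      refine Finset.prod_congr rfl (fun j _ => ?_)
      simp [(by omega : ¬ (m + (j:ℕ) < m)), (by omega : m + (j:ℕ) - m = (j:ℕ)), j.isLt]
  calc μ (A ∩ Pat m s) = μ (⋃ f ∈ F, (Cyl hr m f ∩ Pat m s)) := by
        rw [hAU, Set.iUnion₂_inter]
    _ = ∑ f ∈ F, μ (Cyl hr m f ∩ Pat m s) := by
        refine measure_biUnion_finset (fun f hf g hg hfg =>
          ((hdisj hf hg hfg).mono Set.inter_subset_left Set.inter_subset_left)) (fun f _ =>
          ((measurableSet_Cyl hr m f).inter (measurableSet_Pat m s)))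
    _ = ∑ f ∈ F, μ (Cyl hr m f) * pword p s := Finset.sum_congr rfl key
    _ = (∑ f ∈ F, μ (Cyl hr m f)) * pword p s := by rw [Finset.sum_mul]
    _ = μ A * pword p s := by
        rw [hAU, measure_biUnion_finset hdisj (fun f _ => measurableSet_Cyl hr m f)]

end meas

variable {r : ℕ}

/-- `w` has just occurred at time `k` (ending at position `k-1`). -/
def ends (w : List (Fin r)) (k : ℕ) (ξ : ℕ → Fin r) : Prop :=
  w.length ≤ k ∧ ∀ j : ℕ, (hj : j < w.length) → ξ (k - w.length + j) = w.get ⟨j, hj⟩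

/-- `{T > t-1}` : no occurrence completed at any time `< t`. -/
def Gs (w : List (Fin r)) (t : ℕ) : Set (ℕ → Fin r) := {ξ | ∀ k < t, ¬ ends w k ξ}

/-- `{T = m}` -/
def Am (w : List (Fin r)) (m : ℕ) : Set (ℕ → Fin r) := {ξ | ends w m ξ} ∩ Gs w m

lemma ends_set_eq (w : List (Fin r)) {k : ℕ} (h : w.length ≤ k) :
    {ξ : ℕ → Fin r | ends w k ξ} = Pat (k - w.length) w := by
  ext ξ
  simp only [ends, Pat, Set.mem_setOf_eq]
  exact ⟨fun hh => hh.2, fun hh => ⟨h, hh⟩⟩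

lemma ends_set_empty (w : List (Fin r)) {k : ℕ} (h : ¬ w.length ≤ k) :
    {ξ : ℕ → Fin r | ends w k ξ} = ∅ := by
  ext ξ; simp only [ends, Set.mem_setOf_eq, Set.mem_empty_iff_false, iff_false]
  exact fun hh => h hh.1

lemma measurableSet_ends (w : List (Fin r)) (k : ℕ) :
    MeasurableSet {ξ : ℕ → Fin r | ends w k ξ} := by
  by_cases h : w.length ≤ k
  · rw [ends_set_eq w h]; exact measurableSet_Pat _ _
  · rw [ends_set_empty w h]; exact MeasurableSet.empty

lemma measurableSet_Gs (w : List (Fin r)) (t : ℕ) : MeasurableSet (Gs w t) := by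
  have : Gs w t = ⋂ k, ⋂ (_ : k < t), {ξ : ℕ → Fin r | ends w k ξ}ᶜ := by
    ext ξ; simp [Gs]
  rw [this]
  exact MeasurableSet.iInter fun k => MeasurableSet.iInter fun _ =>
    (measurableSet_ends w k).compl

lemma measurableSet_Am (w : List (Fin r)) (m : ℕ) : MeasurableSet (Am w m) :=
  (measurableSet_ends w m).inter (measurableSet_Gs w m)

lemma ends_det (w : List (Fin r)) {k m : ℕ} (hk : k ≤ m) :
    ∀ ξ η : ℕ → Fin r, (∀ i < m, ξ i = η i) → ends w k ξ → ends w k η := by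
  intro ξ η hag ⟨h1, h2⟩
  refine ⟨h1, fun j hj => ?_⟩
  rw [← hag (k - w.length + j) (by omega)]
  exact h2 j hj

lemma det_Gs (w : List (Fin r)) (t : ℕ) : Det t (Gs w t) := by
  intro ξ η hag hξ k hk hends
  exact hξ k hk (ends_det w (le_of_lt hk) η ξ (fun i hi => (hag i hi).symm) hends)

lemma det_Am (w : List (Fin r)) (m : ℕ) : Det m (Am w m) := by
  intro ξ η hag ⟨h1, h2⟩
  exact ⟨ends_det w le_rfl ξ η hag h1, det_Gs w m ξ η hag h2⟩

lemma Gs_antitone (w : List (Fin r)) : ∀ {t t' : ℕ}, t ≤ t' → Gs w t' ⊆ Gs w t :=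
  fun h ξ hξ k hk => hξ k (lt_of_lt_of_le hk h)

/-- the key pointwise formula for `waitTime` -/
lemma waitTime_eq_tsum (w : List (Fin r)) (hw : w ≠ []) (ξ : ℕ → Fin r) :
    waitTime w ξ = ∑' n : ℕ, (Gs w (n + 1)).indicator 1 ξ := by
  have hset : {t : ℝ≥0∞ | ∃ k : ℕ, t = k ∧ w.length ≤ k ∧
      ∀ j : ℕ, (hj : j < w.length) → ξ (k - w.length + j) = w.get ⟨j, hj⟩}
      = (fun k : ℕ => (k : ℝ≥0∞)) '' {k : ℕ | ends w k ξ} := by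
    ext t
    simp only [Set.mem_setOf_eq, Set.mem_image, ends]
    constructor
    · rintro ⟨kk, h1, h2⟩; exact ⟨kk, h2, h1.symm⟩
    · rintro ⟨kk, h2, h1⟩; exact ⟨kk, h1.symm, h2⟩
  by_cases hne : {k : ℕ | ends w k ξ}.Nonempty
  · set m₀ := sInf {k : ℕ | ends w k ξ} with hm₀
    have hmem : ends w m₀ ξ := Nat.sInf_mem hne
    have hleast : ∀ k < m₀, ¬ ends w k ξ := fun k hk => Nat.notMem_of_lt_sInf hk
    have hwt : waitTime w ξ = (m₀ : ℝ≥0∞) := by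
      rw [waitTime, hset]
      apply le_antisymm
      · exact sInf_le ⟨m₀, hmem, rfl⟩
      · refine le_sInf ?_
        rintro t ⟨kk, hkk, rfl⟩
        exact_mod_cast Nat.cast_le.mpr (Nat.sInf_le hkk)
    rw [hwt]
    have hind : ∀ n : ℕ, (Gs w (n + 1)).indicator (1 : (ℕ → Fin r) → ℝ≥0∞) ξ
        = if n < m₀ then 1 else 0 := by
      intro n
      by_cases h : n < m₀
      · rw [if_pos h, Set.indicator_of_mem]
        · rfl
        · exact fun k hk => hleast k (by omega)
      · rw [if_neg h, Set.indicator_of_notMem]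
        intro hG
        exact hG m₀ (by omega) hmem
    rw [tsum_congr hind]
    rw [tsum_eq_sum (s := Finset.range m₀) (fun n hn => by
      simp only [Finset.mem_range] at hn
      rw [if_neg (by omega)])]
    rw [Finset.sum_congr rfl (fun n hn => by
      simp only [Finset.mem_range] at hn
      rw [if_pos hn])]
    simp
  · have hempty : {k : ℕ | ends w k ξ} = ∅ := Set.not_nonempty_iff_eq_empty.mp hne
    have hwt : waitTime w ξ = ⊤ := by
      rw [waitTime, hset, hempty]
      simp
    rw [hwt]
    have hind : ∀ n : ℕ, (Gs w (n + 1)).indicator (1 : (ℕ → Fin r) → ℝ≥0∞) ξ = 1 := by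
      intro n
      rw [Set.indicator_of_mem]
      · rfl
      · intro k _ hends
        exact absurd hends (by
          have : k ∉ ({k : ℕ | ends w k ξ}) := by rw [hempty]; exact Set.notMem_empty k
          exact this)
    rw [tsum_congr hind]
    symm
    rw [ENNReal.tsum_eq_iSup_nat]
    simp only [Finset.sum_const, Finset.card_range, nsmul_eq_mul, mul_one]
    rw [iSup_eq_top]
    intro b hb
    obtain ⟨n, hn⟩ := ENNReal.exists_nat_gt hb.ne
    exact ⟨n, hn⟩

lemma Ew_eq_tsum (w : List (Fin r)) (hw : w ≠ []) (μ : Measure (ℕ → Fin r)) :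
    Ew μ w = ∑' n : ℕ, μ (Gs w (n + 1)) := by
  rw [Ew]
  rw [lintegral_congr (waitTime_eq_tsum w hw)]
  rw [lintegral_tsum (f := fun n => (Gs w (n+1)).indicator (1 : (ℕ → Fin r) → ℝ≥0∞))
    (fun n => ((measurable_const.indicator (measurableSet_Gs w (n+1)))).aemeasurable)]
  exact tsum_congr fun n => lintegral_indicator_one (measurableSet_Gs w (n + 1))


variable {r : ℕ}

/-- the correlation coefficient `c_d` -/
noncomputable def cc (p : Fin r → ℝ≥0∞) (w : List (Fin r)) (d : ℕ) : ℝ≥0∞ :=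
  if w.take (w.length - d) = w.drop d then pword p (w.drop (w.length - d)) else 0

lemma cc_of_ge (p : Fin r → ℝ≥0∞) (w : List (Fin r)) {d : ℕ} (hd : w.length ≤ d) :
    cc p w d = pword p w := by
  have h0 : w.length - d = 0 := by omega
  rw [cc, h0, List.drop_zero, List.take_zero, if_pos (List.drop_eq_nil_of_le hd).symm]

section events

lemma get_drop' (w : List (Fin r)) (a j : ℕ) (hj : j < (w.drop a).length)
    (i : ℕ) (hi : i < w.length) (hij : a + j = i) :
    (w.drop a).get ⟨j, hj⟩ = w.get ⟨i, hi⟩ := by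
  subst hij
  simp [List.get_eq_getElem, List.getElem_drop]

lemma get_congr' (w : List (Fin r)) (i i' : ℕ) (hi : i < w.length) (hi' : i' < w.length)
    (h : i = i') : w.get ⟨i, hi⟩ = w.get ⟨i', hi'⟩ := by subst h; rfl

lemma border_elem (w : List (Fin r)) {d : ℕ} (hd : d < w.length)
    (hb : w.take (w.length - d) = w.drop d) {i : ℕ} (hi : i < w.length - d) :
    w.get ⟨i, by omega⟩ = w.get ⟨d + i, by omega⟩ := by
  have h1 : (w.take (w.length - d))[i]'(by rw [List.length_take]; omega)
      = (w.drop d)[i]'(by rw [List.length_drop]; omega) := by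
    congr 1
  rw [List.getElem_take, List.getElem_drop] at h1
  simpa [List.get_eq_getElem] using h1

lemma inter_ends_border (w : List (Fin r)) {m d : ℕ} (hd : d < w.length)
    (hb : w.take (w.length - d) = w.drop d) :
    Am w m ∩ {ξ | ends w (m + d) ξ}
      = Am w m ∩ Pat m (w.drop (w.length - d)) := by
  ext ξ
  simp only [Set.mem_inter_iff, Am, Set.mem_setOf_eq, and_congr_right_iff]
  rintro ⟨⟨hLm, hm⟩, -⟩
  have hlen : (w.drop (w.length - d)).length = d := by
    rw [List.length_drop]; omega
  constructor
  · rintro ⟨hLmd, hmd⟩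
    intro j hj
    rw [hlen] at hj
    have h1 := hmd (w.length - d + j) (by omega)
    rw [(by omega : m + d - w.length + (w.length - d + j) = m + j)] at h1
    rw [h1]
    exact (get_drop' w _ _ _ _ (by omega) rfl).symm
  · intro hPat
    refine ⟨by omega, fun i hi => ?_⟩
    rcases lt_or_ge i (w.length - d) with hc | hc
    · have h1 := hm (d + i) (by omega)
      rw [(by omega : m - w.length + (d + i) = m + d - w.length + i)] at h1
      rw [h1]
      exact ((border_elem w hd hb hc).trans (get_congr' w _ _ _ _ rfl)).symm
    · have h1 := hPat (i - (w.length - d)) (by rw [hlen]; omega)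
      rw [(by omega : m + (i - (w.length - d)) = m + d - w.length + i)] at h1
      rw [h1]
      exact get_drop' w _ _ _ _ hi (by omega)

lemma inter_ends_nonborder (w : List (Fin r)) {m d : ℕ} (hd : d < w.length)
    (hb : w.take (w.length - d) ≠ w.drop d) :
    Am w m ∩ {ξ | ends w (m + d) ξ} = ∅ := by
  ext ξ
  simp only [Set.mem_inter_iff, Am, Set.mem_setOf_eq, Set.mem_empty_iff_false, iff_false]
  rintro ⟨⟨⟨hLm, hm⟩, -⟩, ⟨hLmd, hmd⟩⟩
  refine hb (List.ext_getElem (by rw [List.length_take, List.length_drop]; omega)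
    (fun i hi1 hi2 => ?_))
  rw [List.length_take] at hi1
  have hiw : i < w.length - d := lt_of_lt_of_le hi1 inf_le_left
  rw [List.getElem_take, List.getElem_drop]
  have h1 := hmd i (by omega)
  have h2 := hm (d + i) (by omega)
  rw [(by omega : m - w.length + (d + i) = m + d - w.length + i)] at h2
  rw [List.get_eq_getElem] at h1 h2
  rw [← h1, ← h2]

end events

section meas2
variable (p : Fin r → ℝ≥0∞) (μ : Measure (ℕ → Fin r))
variable (hiid : ∀ (m : ℕ) (f : ℕ → Fin r),
      μ {ξ | ∀ i < m, ξ i = f i} = ∏ i ∈ Finset.range m, p (f i))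
variable (hr : 0 < r) (w : List (Fin r))

include hiid hr in
lemma meas_Am_inter_ends (m d : ℕ) :
    μ (Am w m ∩ {ξ | ends w (m + d) ξ}) = μ (Am w m) * cc p w d := by
  rcases le_or_gt w.length d with hd | hd
  · rw [cc_of_ge p w hd]
    rw [ends_set_eq w (by omega : w.length ≤ m + d)]
    have hE : m + d - w.length = m + (d - w.length) := by omega
    rw [hE]
    exact meas_inter_Pat p μ hiid hr _ _ ((det_Am w m).mono (by omega)) w
  · by_cases hb : w.take (w.length - d) = w.drop d
    · rw [inter_ends_border w hd hb, cc, if_pos hb]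
      exact meas_inter_Pat p μ hiid hr _ _ (det_Am w m) _
    · rw [inter_ends_nonborder w hd hb, cc, if_neg hb]
      simp

include hiid hr in
lemma meas_ends [IsProbabilityMeasure μ] (n : ℕ) :
    μ {ξ | ends w n ξ} = if w.length ≤ n then pword p w else 0 := by
  by_cases h : w.length ≤ n
  · rw [if_pos h, ends_set_eq w h]
    have := meas_inter_Pat p μ hiid hr (n - w.length) Set.univ
      (fun ξ η _ hξ => Set.mem_univ η) w
    rw [Set.univ_inter, measure_univ, one_mul] at this
    exact this
  · rw [if_neg h, ends_set_empty w h]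
    simp

include hiid hr in
lemma meas_ends_decomp (n : ℕ) :
    μ {ξ | ends w n ξ} = ∑ m ∈ Finset.range (n + 1), μ (Am w m) * cc p w (n - m) := by
  have hdec : {ξ : ℕ → Fin r | ends w n ξ}
      = ⋃ m ∈ Finset.range (n + 1), (Am w m ∩ {ξ | ends w n ξ}) := by
    ext ξ
    simp only [Set.mem_setOf_eq, Set.mem_iUnion, Finset.mem_range, exists_prop]
    constructor
    · intro hξ
      have hne : {k : ℕ | ends w k ξ}.Nonempty := ⟨n, hξ⟩
      refine ⟨sInf {k : ℕ | ends w k ξ}, by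
          have := Nat.sInf_le (show n ∈ {k : ℕ | ends w k ξ} from hξ); omega, ?_, hξ⟩
      exact ⟨Nat.sInf_mem hne, fun k hk => Nat.notMem_of_lt_sInf hk⟩
    · rintro ⟨m, -, -, hξ⟩; exact hξ
  have hdisj : (↑(Finset.range (n + 1)) : Set ℕ).PairwiseDisjoint
      (fun m => Am w m ∩ {ξ | ends w n ξ}) := by
    intro a _ b _ hab
    refine Set.disjoint_left.mpr ?_
    rintro ξ ⟨⟨ha1, ha2⟩, -⟩ ⟨⟨hb1, hb2⟩, -⟩
    rcases lt_or_gt_of_ne hab with h | h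
    · exact hb2 a h ha1
    · exact ha2 b h hb1
  rw [hdec, measure_biUnion_finset hdisj
    (fun m _ => (measurableSet_Am w m).inter (measurableSet_ends w n))]
  refine Finset.sum_congr rfl (fun m hm => ?_)
  simp only [Finset.mem_range] at hm
  have := meas_Am_inter_ends p μ hiid hr w m (n - m)
  rw [show m + (n - m) = n from by omega] at this
  exact this

end meas2

lemma pword_cons (p : Fin r → ℝ≥0∞) (a : Fin r) (s : List (Fin r)) :
    pword p (a :: s) = p a * pword p s := by simp [pword]

lemma pword_append (p : Fin r → ℝ≥0∞) (s t : List (Fin r)) :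
    pword p (s ++ t) = pword p s * pword p t := by simp [pword]

lemma pword_le_one (p : Fin r → ℝ≥0∞) (hp : ∀ x, p x ≤ 1) (s : List (Fin r)) :
    pword p s ≤ 1 := by
  induction s with
  | nil => simp [pword]
  | cons a s ih => rw [pword_cons]; exact mul_le_one' (hp a) ih

lemma pword_ne_zero (p : Fin r → ℝ≥0∞) (hp : ∀ x, 0 < p x) (s : List (Fin r)) :
    pword p s ≠ 0 := by
  induction s with
  | nil => simp [pword]
  | cons a s ih => rw [pword_cons]; exact mul_ne_zero (hp a).ne' ih

lemma pword_ne_top (p : Fin r → ℝ≥0∞) (hp : ∀ x, p x ≤ 1) (s : List (Fin r)) :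
    pword p s ≠ ⊤ :=
  ne_top_of_le_ne_top one_ne_top (pword_le_one p hp s)

lemma cc_le_one (p : Fin r → ℝ≥0∞) (hp : ∀ x, p x ≤ 1) (w : List (Fin r)) (d : ℕ) :
    cc p w d ≤ 1 := by
  rw [cc]
  split
  · exact pword_le_one p hp _
  · exact zero_le_one

/-- the triangle reindexing -/
lemma triangle (a c : ℕ → ℝ≥0∞) (M : ℕ) :
    ∑ n ∈ Finset.range M, ∑ m ∈ Finset.range (n + 1), a m * c (n - m)
      = ∑ d ∈ Finset.range M, c d * ∑ m ∈ Finset.range (M - d), a m := by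
  induction M with
  | zero => simp
  | succ M ih =>
    rw [Finset.sum_range_succ, ih]
    have h1 : ∀ d ∈ Finset.range (M + 1), c d * ∑ m ∈ Finset.range (M + 1 - d), a m
        = c d * ∑ m ∈ Finset.range (M - d), a m + c d * a (M - d) := by
      intro d hd; rw [Finset.mem_range] at hd
      rw [show M + 1 - d = (M - d) + 1 by omega, Finset.sum_range_succ, mul_add]
    rw [Finset.sum_congr rfl h1, Finset.sum_add_distrib]
    congr 1
    · rw [Finset.sum_range_succ]
      simp
    · rw [← Finset.sum_range_reflect (fun j => c j * a (M - j)) (M + 1)]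
      refine Finset.sum_congr rfl fun m hm => ?_
      rw [Finset.mem_range] at hm
      rw [show M + 1 - 1 - m = M - m by omega, show M - (M - m) = m by omega, mul_comm]

lemma sum_ite_const (x : ℝ≥0∞) (L M : ℕ) :
    ∑ n ∈ Finset.range M, (if L ≤ n then x else 0) = (↑(M - L) : ℝ≥0∞) * x := by
  induction M with
  | zero => simp
  | succ M ihM =>
    rw [Finset.sum_range_succ, ihM]
    by_cases h : L ≤ M
    · rw [if_pos h, show M + 1 - L = (M - L) + 1 by omega]
      push_cast
      ring
    · rw [if_neg h, show M + 1 - L = 0 by omega, show M - L = 0 by omega]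
      simp

section alg
variable (p : Fin r → ℝ≥0∞) (μ : Measure (ℕ → Fin r))
variable (hiid : ∀ (m : ℕ) (f : ℕ → Fin r),
      μ {ξ | ∀ i < m, ξ i = f i} = ∏ i ∈ Finset.range m, p (f i))
variable (hr : 0 < r) (w : List (Fin r))

include hiid hr in
lemma sum_Am_add_Gs [IsProbabilityMeasure μ] (t : ℕ) :
    (∑ m ∈ Finset.range t, μ (Am w m)) + μ (Gs w t) = 1 := by
  have hdisjAm : (↑(Finset.range t) : Set ℕ).PairwiseDisjoint (Am w) := by
    intro a _ b _ hab
    refine Set.disjoint_left.mpr ?_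
    rintro ξ ⟨ha1, ha2⟩ ⟨hb1, hb2⟩
    rcases lt_or_gt_of_ne hab with h | h
    · exact hb2 a h ha1
    · exact ha2 b h hb1
  rw [← measure_biUnion_finset hdisjAm (fun m _ => measurableSet_Am w m)]
  rw [← measure_union ?hd (measurableSet_Gs w t)]
  · rw [show (⋃ m ∈ Finset.range t, Am w m) ∪ Gs w t = Set.univ from ?_]
    · exact measure_univ
    ext ξ
    simp only [Set.mem_union, Set.mem_iUnion, Finset.mem_range, Set.mem_univ, iff_true,
      exists_prop]
    by_cases h : ∃ kk, kk < t ∧ ends w kk ξ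
    · left
      obtain ⟨kk, hkt, hkk⟩ := h
      have hne : {k : ℕ | ends w k ξ}.Nonempty := ⟨kk, hkk⟩
      refine ⟨sInf {k : ℕ | ends w k ξ}, ?_, Nat.sInf_mem hne,
        fun j hj => Nat.notMem_of_lt_sInf hj⟩
      have := Nat.sInf_le (show kk ∈ {k : ℕ | ends w k ξ} from hkk)
      omega
    · right
      intro kk hkk hc
      exact h ⟨kk, hkk, hc⟩
  case hd =>
    refine Set.disjoint_left.mpr ?_
    rintro ξ hξ hG
    simp only [Set.mem_iUnion, Finset.mem_range, exists_prop] at hξ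
    obtain ⟨m, hmt, hm1, _⟩ := hξ
    exact hG m hmt hm1

include hiid hr in
lemma star_identity [IsProbabilityMeasure μ] (M : ℕ) :
    (↑(M - w.length) : ℝ≥0∞) * pword p w
      + ∑ d ∈ Finset.range M, cc p w d * μ (Gs w (M - d))
      = ∑ d ∈ Finset.range M, cc p w d := by
  have htri : ∑ n ∈ Finset.range M, μ {ξ : ℕ → Fin r | ends w n ξ}
      = ∑ d ∈ Finset.range M, cc p w d * ∑ m ∈ Finset.range (M - d), μ (Am w m) := by
    rw [Finset.sum_congr rfl (fun n _ => meas_ends_decomp p μ hiid hr w n)]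
    exact triangle (fun m => μ (Am w m)) (cc p w) M
  have hsum_e : ∑ n ∈ Finset.range M, μ {ξ : ℕ → Fin r | ends w n ξ}
      = (↑(M - w.length) : ℝ≥0∞) * pword p w := by
    rw [Finset.sum_congr rfl (fun n _ => meas_ends p μ hiid hr w n)]
    exact sum_ite_const (pword p w) w.length M
  calc (↑(M - w.length) : ℝ≥0∞) * pword p w
        + ∑ d ∈ Finset.range M, cc p w d * μ (Gs w (M - d))
      = ∑ d ∈ Finset.range M, cc p w d * ∑ m ∈ Finset.range (M - d), μ (Am w m)
        + ∑ d ∈ Finset.range M, cc p w d * μ (Gs w (M - d)) := by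
        rw [← htri, hsum_e]
    _ = ∑ d ∈ Finset.range M, (cc p w d * ∑ m ∈ Finset.range (M - d), μ (Am w m)
        + cc p w d * μ (Gs w (M - d))) := by rw [Finset.sum_add_distrib]
    _ = ∑ d ∈ Finset.range M, cc p w d := by
        refine Finset.sum_congr rfl fun d _ => ?_
        rw [← mul_add, sum_Am_add_Gs p μ hiid hr w (M - d), mul_one]

include hiid hr in
lemma J_identity [IsProbabilityMeasure μ] (hple : ∀ x, p x ≤ 1) (m : ℕ) :
    (∑ d ∈ Finset.range w.length, cc p w d * μ (Gs w (m + w.length - d)))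
      + pword p w * (∑ t ∈ Finset.range m, μ (Gs w (t + 1)))
      = ∑ d ∈ Finset.range w.length, cc p w d := by
  set L := w.length with hL
  have hstar := star_identity p μ hiid hr w (m + L)
  rw [show m + L - L = m by omega] at hstar
  -- split the two range (m+L) sums at L
  have hsplit1 : ∑ d ∈ Finset.range (m + L), cc p w d
      = (∑ d ∈ Finset.range L, cc p w d) + ↑m * pword p w := by
    rw [Finset.range_eq_Ico, ← Finset.sum_Ico_consecutive _ (Nat.zero_le L)
      (by omega : L ≤ m + L), ← Finset.range_eq_Ico]
    congr 1
    rw [Finset.sum_congr rfl (fun d hd => cc_of_ge p w (Finset.mem_Ico.mp hd).1)]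
    rw [Finset.sum_const, Nat.card_Ico, nsmul_eq_mul, show m + L - L = m from by omega]
  have hsplit2 : ∑ d ∈ Finset.range (m + L), cc p w d * μ (Gs w (m + L - d))
      = (∑ d ∈ Finset.range L, cc p w d * μ (Gs w (m + L - d)))
        + pword p w * (∑ t ∈ Finset.range m, μ (Gs w (t + 1))) := by
    rw [Finset.range_eq_Ico, ← Finset.sum_Ico_consecutive _ (Nat.zero_le L)
      (by omega : L ≤ m + L), ← Finset.range_eq_Ico]
    congr 1
    rw [Finset.sum_congr rfl (fun d hd => by
        rw [cc_of_ge p w (Finset.mem_Ico.mp hd).1]), ← Finset.mul_sum]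
    congr 1
    refine Finset.sum_nbij' (fun d => m + L - d - 1) (fun t => m + L - t - 1) ?_ ?_ ?_ ?_ ?_
    · intro d hd; rw [Finset.mem_Ico] at hd; rw [Finset.mem_range]; omega
    · intro t ht; rw [Finset.mem_range] at ht; rw [Finset.mem_Ico]; omega
    · intro d hd; rw [Finset.mem_Ico] at hd; omega
    · intro t ht; rw [Finset.mem_range] at ht; omega
    · intro d hd; rw [Finset.mem_Ico] at hd
      rw [show m + L - d - 1 + 1 = m + L - d by omega]
  rw [hsplit1, hsplit2] at hstar
  -- cancel ↑m * pword p w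
  have hfin : (↑m : ℝ≥0∞) * pword p w ≠ ⊤ :=
    ENNReal.mul_ne_top (natCast_ne_top m) (pword_ne_top p hple w)
  apply WithTop.add_right_cancel hfin
  calc (∑ d ∈ Finset.range L, cc p w d * μ (Gs w (m + L - d)))
        + pword p w * (∑ t ∈ Finset.range m, μ (Gs w (t + 1))) + ↑m * pword p w
      = ↑m * pword p w + ((∑ d ∈ Finset.range L, cc p w d * μ (Gs w (m + L - d)))
        + pword p w * (∑ t ∈ Finset.range m, μ (Gs w (t + 1)))) := by ring
    _ = (∑ d ∈ Finset.range L, cc p w d) + ↑m * pword p w := hstar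

include hiid hr in
lemma pw_mul_Ew [IsProbabilityMeasure μ] (hple : ∀ x, p x ≤ 1) (hpos : ∀ x, 0 < p x)
    (hw : w ≠ []) :
    pword p w * Ew μ w = ∑ d ∈ Finset.range w.length, cc p w d := by
  have hJ := J_identity p μ hiid hr w hple
  have hEw : Ew μ w = ⨆ m, ∑ t ∈ Finset.range m, μ (Gs w (t + 1)) := by
    rw [Ew_eq_tsum w hw μ, ENNReal.tsum_eq_iSup_nat]
  have hle : pword p w * Ew μ w ≤ ∑ d ∈ Finset.range w.length, cc p w d := by
    rw [hEw, ENNReal.mul_iSup]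
    refine iSup_le fun m => ?_
    rw [← hJ m]
    exact le_add_self
  have hCbtop : (∑ d ∈ Finset.range w.length, cc p w d) ≠ ⊤ := by
    refine ne_top_of_le_ne_top (?_ : (↑w.length * 1 : ℝ≥0∞) ≠ ⊤) ?_
    · exact ENNReal.mul_ne_top (natCast_ne_top w.length) one_ne_top
    · calc ∑ d ∈ Finset.range w.length, cc p w d
          ≤ ∑ _d ∈ Finset.range w.length, 1 :=
            Finset.sum_le_sum fun d _ => cc_le_one p hple w d
        _ = ↑w.length * 1 := by simp
  have hpwn0 : pword p w ≠ 0 := pword_ne_zero p hpos w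
  have hEwtop : Ew μ w ≠ ⊤ := by
    intro h
    rw [h, ENNReal.mul_top hpwn0] at hle
    exact hCbtop (top_le_iff.mp hle)
  have htsum : ∑' t : ℕ, μ (Gs w (t + 1)) ≠ ⊤ := by
    rw [← Ew_eq_tsum w hw μ]
    exact hEwtop
  have htend : Filter.Tendsto (fun t : ℕ => μ (Gs w (t + 1))) Filter.atTop (nhds 0) :=
    ENNReal.tendsto_atTop_zero_of_tsum_ne_top htsum
  have hR : ∀ m, (∑ d ∈ Finset.range w.length, cc p w d * μ (Gs w (m + w.length - d)))
      ≤ ↑w.length * μ (Gs w (m + 1)) := by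
    intro m
    calc ∑ d ∈ Finset.range w.length, cc p w d * μ (Gs w (m + w.length - d))
        ≤ ∑ _d ∈ Finset.range w.length, 1 * μ (Gs w (m + 1)) := by
          refine Finset.sum_le_sum fun d hd => ?_
          rw [Finset.mem_range] at hd
          refine mul_le_mul' (cc_le_one p hple w d) (measure_mono ?_)
          exact Gs_antitone w (by omega)
      _ = ↑w.length * μ (Gs w (m + 1)) := by simp [Finset.sum_const, nsmul_eq_mul]
  have hge : (∑ d ∈ Finset.range w.length, cc p w d) ≤ pword p w * Ew μ w := by
    have h1 : ∀ m : ℕ, (∑ d ∈ Finset.range w.length, cc p w d)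
        ≤ ↑w.length * μ (Gs w (m + 1)) + pword p w * Ew μ w := by
      intro m
      rw [← hJ m]
      refine add_le_add (hR m) (mul_le_mul_right ?_ (pword p w))
      rw [hEw]
      exact le_iSup (fun m => ∑ t ∈ Finset.range m, μ (Gs w (t + 1))) m
    have h2 : Filter.Tendsto (fun m : ℕ => ↑w.length * μ (Gs w (m + 1)) + pword p w * Ew μ w)
        Filter.atTop (nhds (↑w.length * 0 + pword p w * Ew μ w)) :=
      Filter.Tendsto.add_const _
        (ENNReal.Tendsto.const_mul htend (Or.inr (natCast_ne_top w.length)))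
    rw [mul_zero, zero_add] at h2
    exact ge_of_tendsto' h2 h1
  exact le_antisymm hle hge

end alg

lemma suffix_of_suffix_length_le {l1 l2 l3 : List (Fin r)}
    (h1 : l1 <:+ l3) (h2 : l2 <:+ l3) (h : l1.length ≤ l2.length) : l1 <:+ l2 := by
  rw [← List.reverse_prefix] at h1 h2 ⊢
  exact List.prefix_of_prefix_length_le h1 h2 (by simpa using h)

section words
variable (w : List (Fin r)) (k : ℕ) (u : ℕ → List (Fin r))

lemma chain_border (hu0 : u 0 = w)
    (hchain : ∀ i < k, IsLongestBifix (u (i + 1)) (u i)) :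
    ∀ i, i ≤ k → u i <+: w ∧ u i <:+ w := by
  intro i
  induction i with
  | zero => intro _; rw [hu0]; exact ⟨List.prefix_rfl, List.suffix_rfl⟩
  | succ i ih =>
    intro hik
    obtain ⟨hpre, hsuf⟩ := ih (by omega)
    obtain ⟨⟨_, hp, hs⟩, -⟩ := hchain i (by omega)
    exact ⟨hp.trans hpre, hs.trans hsuf⟩

lemma chain_len_lt (hchain : ∀ i < k, IsLongestBifix (u (i + 1)) (u i)) :
    ∀ i, i < k → (u (i + 1)).length < (u i).length := by
  intro i hik
  obtain ⟨⟨hne, hp, _⟩, -⟩ := hchain i hik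
  exact lt_of_le_of_ne hp.length_le (fun h => hne (hp.eq_of_length h))

lemma chain_len_anti (hchain : ∀ i < k, IsLongestBifix (u (i + 1)) (u i)) :
    ∀ i j, i < j → j ≤ k → (u j).length < (u i).length := by
  intro i j
  induction j with
  | zero => omega
  | succ j ih =>
    intro hij hjk
    have h1 := chain_len_lt k u hchain j (by omega)
    rcases Nat.lt_or_ge i j with h | h
    · exact lt_trans h1 (ih h (by omega))
    · have : i = j := by omega
      subst this
      exact h1

lemma chain_complete (huk : u k = [])
    (hchain : ∀ i < k, IsLongestBifix (u (i + 1)) (u i)) :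
    ∀ n i, k - i ≤ n → i ≤ k → ∀ v, IsBifix v (u i) → ∃ j, i < j ∧ j ≤ k ∧ v = u j := by
  intro n
  induction n with
  | zero =>
    intro i h1 h2 v hv
    have : i = k := by omega
    subst this
    rw [huk] at hv
    obtain ⟨hne, hp, -⟩ := hv
    exact absurd (List.prefix_nil.mp hp) hne
  | succ n ih =>
    intro i h1 h2 v hv
    by_cases hik : i = k
    · subst hik
      rw [huk] at hv
      obtain ⟨hne, hp, -⟩ := hv
      exact absurd (List.prefix_nil.mp hp) hne
    · have hik' : i < k := by omega
      obtain ⟨hbif1, hmax⟩ := hchain i hik'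
      by_cases hv1 : v = u (i + 1)
      · exact ⟨i + 1, by omega, by omega, hv1⟩
      · have hlen : v.length ≤ (u (i + 1)).length := hmax v hv
        obtain ⟨hne, hp, hs⟩ := hv
        obtain ⟨hne1, hp1, hs1⟩ := hbif1
        have hbifv : IsBifix v (u (i + 1)) :=
          ⟨hv1, List.prefix_of_prefix_length_le hp hp1 hlen,
            suffix_of_suffix_length_le hs hs1 hlen⟩
        obtain ⟨j, hj1, hj2, hj3⟩ := ih (i + 1) (by omega) (by omega) v hbifv
        exact ⟨j, by omega, hj2, hj3⟩

lemma comb_sum (p : Fin r → ℝ≥0∞) (hpos : ∀ x, 0 < p x) (hple : ∀ x, p x ≤ 1)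
    (hw : w ≠ []) (hu0 : u 0 = w) (huk : u k = [])
    (hchain : ∀ i < k, IsLongestBifix (u (i + 1)) (u i)) :
    ∑ d ∈ Finset.range w.length, cc p w d
      = pword p w * ∑ i ∈ Finset.range k, (pword p (u i))⁻¹ := by
  classical
  have hk0 : 0 < k := by
    rcases Nat.eq_zero_or_pos k with h | h
    · exfalso; apply hw; rw [← hu0, ← huk, h]
    · exact h
  -- basic facts about the chain for i < k
  have hlen_le : ∀ i, i ≤ k → (u i).length ≤ w.length := by
    intro i hik
    exact ((chain_border w k u hu0 hchain i hik).1).length_le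
  have hlen_pos : ∀ i, i < k → 0 < (u i).length := by
    intro i hik
    have := chain_len_anti k u hchain i k hik le_rfl
    rw [huk] at this
    simpa using this
  have htake : ∀ i, i ≤ k → w.take ((u i).length) = u i := by
    intro i hik
    exact (List.prefix_iff_eq_take.mp (chain_border w k u hu0 hchain i hik).1).symm
  have hdrop : ∀ i, i ≤ k → w.drop (w.length - (u i).length) = u i := by
    intro i hik
    exact (List.suffix_iff_eq_drop.mp (chain_border w k u hu0 hchain i hik).2).symm
  -- value of cc at the chain points
  have hval : ∀ i, i < k → cc p w (w.length - (u i).length)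
      = pword p w * (pword p (u i))⁻¹ := by
    intro i hik
    have hl := hlen_le i (le_of_lt hik)
    have h1 : w.length - (w.length - (u i).length) = (u i).length := by omega
    rw [cc, h1, htake i (le_of_lt hik), hdrop i (le_of_lt hik), if_pos rfl]
    have hsplit : pword p w = pword p (u i) * pword p (w.drop (u i).length) := by
      conv_lhs => rw [← List.take_append_drop ((u i).length) w]
      rw [pword_append, htake i (le_of_lt hik)]
    rw [hsplit, mul_comm (pword p (u i)) _, mul_assoc,
      ENNReal.mul_inv_cancel (pword_ne_zero p hpos (u i)) (pword_ne_top p hple (u i)), mul_one]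
  -- the image of the chain index map
  have hinj : ∀ x ∈ Finset.range k, ∀ y ∈ Finset.range k,
      w.length - (u x).length = w.length - (u y).length → x = y := by
    intro x hx y hy hxy
    rw [Finset.mem_range] at hx hy
    by_contra hne
    rcases Nat.lt_or_ge x y with h | h
    · have := chain_len_anti k u hchain x y h (by omega)
      have hx' := hlen_le x (by omega)
      have hy' := hlen_le y (by omega)
      omega
    · have h' : y < x := by omega
      have := chain_len_anti k u hchain y x h' (by omega)
      have hx' := hlen_le x (by omega)
      have hy' := hlen_le y (by omega)
      omega
  have hsub : Finset.image (fun i => w.length - (u i).length) (Finset.range k)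
      ⊆ Finset.range w.length := by
    intro d hd
    rw [Finset.mem_image] at hd
    obtain ⟨i, hi, rfl⟩ := hd
    rw [Finset.mem_range] at hi ⊢
    have := hlen_pos i hi
    have hwl : 0 < w.length := List.length_pos_iff.mpr hw
    omega
  have hzero : ∀ d ∈ Finset.range w.length,
      d ∉ Finset.image (fun i => w.length - (u i).length) (Finset.range k) →
      cc p w d = 0 := by
    intro d hd hnd
    rw [Finset.mem_range] at hd
    by_contra hcc
    have hcond : w.take (w.length - d) = w.drop d := by
      by_contra hcond
      rw [cc, if_neg hcond] at hcc
      exact hcc rfl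
    -- the prefix of length w.length - d is a border
    have hvlen : (w.take (w.length - d)).length = w.length - d := by
      rw [List.length_take]; omega
    have hex : ∃ i, i < k ∧ (u i).length = w.length - d := by
      rcases Nat.lt_or_ge d 1 with h0 | h0
      · -- d = 0 : the word itself, i = 0
        have : d = 0 := by omega
        subst this
        exact ⟨0, hk0, by rw [hu0]; omega⟩
      · -- proper bifix
        have hbif : IsBifix (w.take (w.length - d)) w := by
          refine ⟨?_, List.take_prefix _ _, hcond ▸ List.drop_suffix d w⟩
          intro hvw
          have := congrArg List.length hvw
          rw [hvlen] at this
          omega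
        have hbif' : IsBifix (w.take (w.length - d)) (u 0) := by rw [hu0]; exact hbif
        obtain ⟨j, hj0, hjk, hj⟩ := chain_complete k u huk hchain k 0 (by omega)
          (by omega) _ hbif' 
        have hjlt : j < k := by
          by_contra hjge
          have : j = k := by omega
          subst this
          rw [huk] at hj
          have := congrArg List.length hj
          rw [hvlen] at this
          simp at this
          omega
        exact ⟨j, hjlt, by rw [← hj, hvlen]⟩
    obtain ⟨i, hik, hi⟩ := hex
    apply hnd
    rw [Finset.mem_image]
    refine ⟨i, Finset.mem_range.mpr hik, ?_⟩
    have := hlen_le i (le_of_lt hik)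
    omega
  calc ∑ d ∈ Finset.range w.length, cc p w d
      = ∑ d ∈ Finset.image (fun i => w.length - (u i).length) (Finset.range k), cc p w d :=
        (Finset.sum_subset hsub hzero).symm
    _ = ∑ i ∈ Finset.range k, cc p w (w.length - (u i).length) := Finset.sum_image hinj
    _ = ∑ i ∈ Finset.range k, pword p w * (pword p (u i))⁻¹ :=
        Finset.sum_congr rfl (fun i hi => hval i (Finset.mem_range.mp hi))
    _ = pword p w * ∑ i ∈ Finset.range k, (pword p (u i))⁻¹ := by rw [Finset.mul_sum]

end words

end S12

theorem statement_12 {r : ℕ} (hr : 2 ≤ r) (p : Fin r → ℝ≥0∞)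
    (hp1 : ∑ x, p x = 1) (hpos : ∀ x, 0 < p x)
    (μ : Measure (ℕ → Fin r)) [IsProbabilityMeasure μ]
    (hiid : ∀ (m : ℕ) (f : ℕ → Fin r),
      μ {ξ | ∀ i < m, ξ i = f i} = ∏ i ∈ Finset.range m, p (f i))
    (w : List (Fin r)) (hw : w ≠ []) (k : ℕ) (u : ℕ → List (Fin r))
    (hu0 : u 0 = w) (huk : u k = [])
    (hchain : ∀ i < k, IsLongestBifix (u (i + 1)) (u i)) :
    Ew μ w = ∑ i ∈ Finset.range k, (pword p (u i))⁻¹ := by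
  have hr0 : 0 < r := by omega
  have hple : ∀ x, p x ≤ 1 := by
    intro x
    calc p x ≤ ∑ y, p y := Finset.single_le_sum (fun i _ => zero_le) (Finset.mem_univ x)
      _ = 1 := hp1
  have hmain := S12.pw_mul_Ew p μ hiid hr0 w hple hpos hw
  rw [S12.comb_sum w k u p hpos hple hw hu0 huk hchain] at hmain
  exact (ENNReal.mul_right_strictMono (S12.pword_ne_zero p hpos w)
    (S12.pword_ne_top p hple w)).injective hmain
end

section
/- For every finite word w over X, Σ_{y ∈ X} p(y) E(wy) = E(w) + 1 + (r − 1) p(w)^{-1}, where wy is the word w extended by the letter y. -/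
open MeasureTheory ENNReal

/-!
Conway's formula: `E(w) = ∑ p(w.take k)⁻¹`, summed over the `k ∈ [1, |w|]` for which the
length-`k` prefix of `w` is also a suffix. With `T` the waiting time, the event
"`T > n` and `w` is read at positions `n, …, n + |w| - 1`" has probability `P(T > n) p(w)`, and it
splits according to the value `T = n + k`: then the first occurrence overlaps the given one in a
length-`k` prefix that is also a suffix, and the last `|w| - k` letters are fresh. Summing over `n`
gives `E(w) p(w) = P(T < ∞) p(w) ∑ p(w.take k)⁻¹`, and since the right side is finite so is `E(w)`,
whence `P(T < ∞) = 1`.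

The recurrence then is an identity between these sums: the length-`(k + 1)` prefix of `w ++ [y]` is
a suffix iff the length-`k` prefix of `w` is one and `y = w[k]`, so averaging over `y` shifts the
sum of `w ++ [y]` down to that of `w` (now including `k = 0`), while the full word `w ++ [y]`
contributes `p(w)⁻¹` for each of the `r` letters `y`.
-/

section Window
variable {α : Type*}

def window (ξ : ℕ → α) (i m : ℕ) : List α := (List.range' i m).map ξ

@[simp] lemma length_window (ξ : ℕ → α) (i m : ℕ) : (window ξ i m).length = m := by
  rw [window, List.length_map, List.length_range']

@[simp] lemma getElem_window (ξ : ℕ → α) (i m j : ℕ) (hj : j < (window ξ i m).length) :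
    (window ξ i m)[j] = ξ (i + j) := by
  simp only [window, List.getElem_map, List.getElem_range', one_mul]

lemma window_add (ξ : ℕ → α) (i a b : ℕ) :
    window ξ i (a + b) = window ξ i a ++ window ξ (i + a) b := by
  rw [window, window, window, ← List.map_append]
  simp

lemma drop_window (ξ : ℕ → α) (i m a : ℕ) :
    (window ξ i m).drop a = window ξ (i + a) (m - a) := by
  simp only [window, ← List.map_drop, List.drop_range', mul_one]

lemma take_window (ξ : ℕ → α) (i m a : ℕ) (ha : a ≤ m) :
    (window ξ i m).take a = window ξ i a := by
  obtain ⟨b, rfl⟩ := Nat.exists_eq_add_of_le ha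
  rw [window_add, List.take_left' (length_window ξ i a)]

lemma window_congr {ξ η : ℕ → α} {i m : ℕ} (h : ∀ j < i + m, ξ j = η j) :
    window ξ i m = window η i m := by
  refine List.ext_getElem (by simp) fun j hj _ => ?_
  simp only [getElem_window]
  exact h _ (by simp at hj; omega)

end Window

section WaitTime
variable {r : ℕ} (w : List (Fin r)) (ξ : ℕ → Fin r)

/-- `k` counts the letters read, so the occurrence occupies positions `k - |w|, …, k - 1`. -/
def EndsAt (k : ℕ) : Prop := w.length ≤ k ∧ window ξ (k - w.length) w.length = w

lemma endsAt_iff (k : ℕ) : EndsAt w ξ k ↔ w.length ≤ k ∧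
    ∀ j : ℕ, (hj : j < w.length) → ξ (k - w.length + j) = w.get ⟨j, hj⟩ := by
  refine and_congr_right fun _ => ⟨fun h j hj => ?_, fun h => ?_⟩
  · have := List.getElem_of_eq h (by simpa using hj)
    rwa [getElem_window] at this
  · refine List.ext_getElem (length_window _ _ _) fun j hj _ => ?_
    rw [getElem_window, h j (by simpa using hj), List.get_eq_getElem]

lemma waitTime_eq_sInf :
    waitTime w ξ = sInf {t : ℝ≥0∞ | ∃ k : ℕ, t = k ∧ EndsAt w ξ k} := by
  simp only [endsAt_iff]; rfl

variable {w ξ}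

open Classical in
lemma waitTime_eq_find (h : ∃ k, EndsAt w ξ k) : waitTime w ξ = Nat.find h := by
  rw [waitTime_eq_sInf]
  refine le_antisymm (sInf_le ⟨_, rfl, Nat.find_spec h⟩) (le_sInf ?_)
  rintro _ ⟨k, rfl, hk⟩
  exact_mod_cast Nat.find_min' h hk

lemma waitTime_eq_top (h : ¬ ∃ k, EndsAt w ξ k) : waitTime w ξ = ⊤ := by
  rw [waitTime_eq_sInf, sInf_eq_top]
  rintro _ ⟨k, rfl, hk⟩
  exact absurd ⟨k, hk⟩ h

lemma waitTime_eq_top_or_natCast : waitTime w ξ = ⊤ ∨ ∃ k : ℕ, waitTime w ξ = k := by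
  classical
  by_cases h : ∃ k, EndsAt w ξ k
  · exact Or.inr ⟨_, waitTime_eq_find h⟩
  · exact Or.inl (waitTime_eq_top h)

lemma waitTime_le_natCast_iff {n : ℕ} : waitTime w ξ ≤ n ↔ ∃ k ≤ n, EndsAt w ξ k := by
  classical
  by_cases h : ∃ k, EndsAt w ξ k
  · rw [waitTime_eq_find h, Nat.cast_le, Nat.find_le_iff]
  · simp only [waitTime_eq_top h, top_le_iff, natCast_ne_top, false_iff]
    exact fun ⟨k, _, hk⟩ => h ⟨k, hk⟩

lemma natCast_lt_waitTime_iff {n : ℕ} :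
    (n : ℝ≥0∞) < waitTime w ξ ↔ ∀ k ≤ n, ¬ EndsAt w ξ k := by
  rw [← not_le, waitTime_le_natCast_iff]; push Not; rfl

lemma waitTime_eq_natCast_iff {n : ℕ} :
    waitTime w ξ = n ↔ EndsAt w ξ n ∧ ∀ k < n, ¬ EndsAt w ξ k := by
  classical
  by_cases h : ∃ k, EndsAt w ξ k
  · rw [waitTime_eq_find h, Nat.cast_inj, Nat.find_eq_iff]
  · simp only [waitTime_eq_top h, top_ne_natCast, false_iff, not_and]
    exact fun hn => absurd ⟨n, hn⟩ h

end WaitTime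

section Determined
variable {r : ℕ} (w : List (Fin r))

lemma dependsOn_window_eq (i m : ℕ) (v : List (Fin r)) :
    DependsOn (fun ξ => window ξ i m = v) (Set.Iio (i + m)) := by
  intro ξ η h
  simp only [window_congr h]

lemma dependsOn_endsAt (k : ℕ) : DependsOn (fun ξ => EndsAt w ξ k) (Set.Iio k) := by
  intro ξ η h
  by_cases hk : w.length ≤ k
  · simp only [EndsAt,
      window_congr (i := k - w.length) (m := w.length) fun j hj => h j (show j < k by omega)]
  · simp only [EndsAt, hk, false_and]

lemma dependsOn_natCast_lt_waitTime (n : ℕ) :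
    DependsOn (fun ξ => (n : ℝ≥0∞) < waitTime w ξ) (Set.Iio n) := by
  intro ξ η h
  simp only [natCast_lt_waitTime_iff]
  exact propext <| forall₂_congr fun k hk => by
    rw [show EndsAt w ξ k = EndsAt w η k from
      dependsOn_endsAt w k fun i hi => h i (lt_of_lt_of_le hi hk)]

lemma dependsOn_waitTime_eq_natCast (n : ℕ) :
    DependsOn (fun ξ => waitTime w ξ = n) (Set.Iio n) := by
  intro ξ η h
  simp only [waitTime_eq_natCast_iff]
  rw [show EndsAt w ξ n = EndsAt w η n from dependsOn_endsAt w n h]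
  exact propext <| and_congr_right fun _ => forall₂_congr fun k hk => by
    rw [show EndsAt w ξ k = EndsAt w η k from dependsOn_endsAt w k fun i hi => h i (hi.trans hk)]

lemma measurableSet_of_dependsOn {A : Set (ℕ → Fin r)} {j : ℕ}
    (hA : DependsOn (· ∈ A) (Set.Iio j)) : MeasurableSet A := by
  let R : (ℕ → Fin r) → (Fin j → Fin r) := fun ξ i => ξ i
  have hR : A = R ⁻¹' (R '' A) := by
    refine (Set.subset_preimage_image R A).antisymm ?_
    rintro ξ ⟨η, hη, hηξ⟩
    have := hA (x := η) (y := ξ) fun i hi => congrFun hηξ ⟨i, hi⟩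
    simpa [this] using hη
  rw [hR]
  exact (measurable_pi_lambda _ fun i => measurable_pi_apply _)
    (DiscreteMeasurableSpace.forall_measurableSet _)

end Determined

section Pword
variable {r : ℕ} {p : Fin r → ℝ≥0∞}

lemma pword_append (u v : List (Fin r)) :
    pword p (u ++ v) = pword p u * pword p v := by
  simp [pword]

lemma pword_append_take_drop (w : List (Fin r)) (k : ℕ) :
    pword p (w.take k) * pword p (w.drop k) = pword p w := by
  rw [← pword_append, List.take_append_drop]

lemma pword_eq_prod (u : List (Fin r)) :
    pword p u = ∏ i : Fin u.length, p u[i] := by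
  rw [pword, ← List.prod_ofFn]
  exact congrArg List.prod (List.ofFn_getElem_eq_map u p).symm

lemma pword_ne_zero (hp : ∀ x, p x ≠ 0) (u : List (Fin r)) : pword p u ≠ 0 :=
  List.prod_ne_zero (by simpa using fun x _ => hp x)

lemma pword_ne_top (hp : ∀ x, p x ≠ ⊤) (u : List (Fin r)) : pword p u ≠ ⊤ := by
  rw [pword_eq_prod]
  exact ENNReal.prod_ne_top fun i _ => hp _

lemma mul_inv_pword_append_singleton (hp0 : ∀ x, p x ≠ 0) (hp : ∀ x, p x ≠ ⊤)
    (w : List (Fin r)) (y : Fin r) : p y * (pword p (w ++ [y]))⁻¹ = (pword p w)⁻¹ := by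
  rw [pword_append, ENNReal.mul_inv (.inl (pword_ne_zero hp0 w)) (.inl (pword_ne_top hp w)),
    mul_left_comm, show pword p [y] = p y by simp [pword], ENNReal.mul_inv_cancel (hp0 y) (hp y),
    mul_one]

end Pword

section Bernoulli
variable {r : ℕ}

def IsBernoulli (p : Fin r → ℝ≥0∞) (μ : Measure (ℕ → Fin r)) : Prop :=
  ∀ (m : ℕ) (f : ℕ → Fin r), μ {ξ | ∀ i < m, ξ i = f i} = ∏ i ∈ Finset.range m, p (f i)

variable {p : Fin r → ℝ≥0∞} {μ : Measure (ℕ → Fin r)} [NeZero r]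

lemma IsBernoulli.isProbabilityMeasure (hμ : IsBernoulli p μ) : IsProbabilityMeasure μ :=
  ⟨by simpa using hμ 0 fun _ => 0⟩

lemma IsBernoulli.measure_window_zero (hμ : IsBernoulli p μ) {m : ℕ} {u : List (Fin r)}
    (hu : u.length = m) : μ {ξ | window ξ 0 m = u} = pword p u := by
  subst hu
  have hset : {ξ | window ξ 0 u.length = u} = {ξ | ∀ i < u.length, ξ i = u.getD i 0} := by
    ext ξ
    simp only [Set.mem_ofPred_eq, List.ext_getElem_iff, length_window, getElem_window, true_and]
    exact forall₂_congr fun i hi => by simp [hi]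
  rw [hset, hμ, Finset.prod_range, pword_eq_prod]
  simp

lemma IsBernoulli.measure_inter_window (hμ : IsBernoulli p μ) {A : Set (ℕ → Fin r)} {j : ℕ}
    (hA : DependsOn (· ∈ A) (Set.Iio j)) (v : List (Fin r)) :
    μ (A ∩ {ξ | window ξ j v.length = v}) = μ A * pword p v := by
  classical
  set B := {ξ | window ξ j v.length = v}
  set C : (Fin j → Fin r) → Set (ℕ → Fin r) := fun f => {ξ | window ξ 0 j = List.ofFn f}
  set S := Finset.univ.filter fun f => C f ⊆ A
  have hA_eq : A = ⋃ f ∈ S, C f := by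
    ext ξ
    simp only [Set.mem_iUnion, exists_prop, S, Finset.mem_filter, Finset.mem_univ, true_and]
    refine ⟨fun hξ => ⟨fun i => ξ i, fun η hη => ?_, ?_⟩, fun ⟨f, hf, hξ⟩ => hf hξ⟩
    · have hξη : ∀ i < j, ξ i = η i := fun i hi => by
        have := List.getElem_of_eq hη (by simpa using hi)
        simp only [getElem_window, List.getElem_ofFn, zero_add] at this
        exact this.symm
      exact cast (hA hξη) hξ
    · exact List.ext_getElem (by simp) fun i _ _ => by simp
  have hdisj : (S : Set (Fin j → Fin r)).PairwiseDisjoint C := fun f _ g _ hfg =>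
    Set.disjoint_left.2 fun ξ hf hg => hfg (List.ofFn_injective (hf.symm.trans hg))
  have hC : ∀ f, MeasurableSet (C f) := fun f => by
    have := dependsOn_window_eq 0 j (List.ofFn f)
    rw [zero_add] at this
    exact measurableSet_of_dependsOn this
  have hB : MeasurableSet B := measurableSet_of_dependsOn (dependsOn_window_eq j v.length v)
  have hCB : ∀ f, μ (C f ∩ B) = μ (C f) * pword p v := by
    intro f
    have : C f ∩ B = {ξ | window ξ 0 (j + v.length) = List.ofFn f ++ v} := by
      ext ξ
      simp only [Set.mem_inter_iff, Set.mem_ofPred_eq, window_add, zero_add, C, B]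
      exact ⟨fun ⟨h1, h2⟩ => by rw [h1, h2], fun h => List.append_inj h (by simp)⟩
    rw [this, hμ.measure_window_zero (by simp), hμ.measure_window_zero (by simp), pword_append]
  calc μ (A ∩ B) = μ (⋃ f ∈ S, C f ∩ B) := by
        conv_lhs => rw [hA_eq]
        rw [Set.iUnion₂_inter]
    _ = ∑ f ∈ S, μ (C f ∩ B) :=
        measure_biUnion_finset (hdisj.mono fun f => Set.inter_subset_left)
          fun f _ => (hC f).inter hB
    _ = μ A * pword p v := by
        rw [Finset.sum_congr rfl fun f _ => hCB f, ← Finset.sum_mul,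
          ← measure_biUnion_finset hdisj fun f _ => hC f, ← hA_eq]

end Bernoulli

lemma MeasureTheory.lintegral_eq_tsum_measure_natCast_lt {Ω : Type*} [MeasurableSpace Ω]
    (μ : Measure Ω) {f : Ω → ℝ≥0∞} (hf : ∀ ω, f ω = ⊤ ∨ ∃ k : ℕ, f ω = k)
    (hmeas : ∀ n : ℕ, MeasurableSet {ω | (n : ℝ≥0∞) < f ω}) :
    ∫⁻ ω, f ω ∂μ = ∑' n : ℕ, μ {ω | (n : ℝ≥0∞) < f ω} := by
  have hsum : ∀ ω, f ω = ∑' n : ℕ, {ω | (n : ℝ≥0∞) < f ω}.indicator 1 ω := by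
    intro ω
    rcases hf ω with h | ⟨k, h⟩
    · simp [Set.indicator, h]
    · simp only [Set.indicator, Set.mem_ofPred_eq, h, Nat.cast_lt, Pi.one_apply]
      rw [tsum_eq_sum (s := Finset.range k) fun n hn => by simpa using hn,
        Finset.sum_congr rfl fun n hn => if_pos (Finset.mem_range.1 hn)]
      simp
  rw [lintegral_congr hsum,
    lintegral_tsum fun n => (measurable_one.indicator (hmeas n)).aemeasurable]
  exact tsum_congr fun n => lintegral_indicator_one (hmeas n)

section Overlap
variable {r : ℕ} (p : Fin r → ℝ≥0∞) (w : List (Fin r))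

noncomputable def overlapWeight (k : ℕ) : ℝ≥0∞ :=
  if w.take k = w.drop (w.length - k) then (pword p (w.take k))⁻¹ else 0

noncomputable def overlapSum : ℝ≥0∞ := ∑ k ∈ Finset.range w.length, overlapWeight p w (k + 1)

variable {p}

lemma overlapWeight_zero : overlapWeight p w 0 = 1 := by
  simp [overlapWeight, pword]

lemma overlapWeight_length : overlapWeight p w w.length = (pword p w)⁻¹ := by
  simp [overlapWeight]

lemma pword_mul_overlapWeight (hp0 : ∀ x, p x ≠ 0) (hp : ∀ x, p x ≠ ⊤) (k : ℕ) :
    pword p w * overlapWeight p w k =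
      if w.take k = w.drop (w.length - k) then pword p (w.drop k) else 0 := by
  unfold overlapWeight
  split_ifs
  · rw [← pword_append_take_drop w k, mul_comm (pword p _), mul_assoc,
      ENNReal.mul_inv_cancel (pword_ne_zero hp0 _) (pword_ne_top hp _), mul_one]
  · rw [mul_zero]

lemma overlapSum_ne_top (hp0 : ∀ x, p x ≠ 0) : overlapSum p w ≠ ⊤ := by
  refine ENNReal.sum_ne_top.2 fun k _ => ?_
  unfold overlapWeight
  split_ifs
  · exact ENNReal.inv_ne_top.2 (pword_ne_zero hp0 _)
  · exact zero_ne_top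

end Overlap

section Renewal
variable {r : ℕ} {p : Fin r → ℝ≥0∞} {μ : Measure (ℕ → Fin r)} {w : List (Fin r)}

lemma lt_waitTime_and_window_eq_iff {ξ : ℕ → Fin r} {n : ℕ} :
    ((n : ℝ≥0∞) < waitTime w ξ ∧ window ξ n w.length = w) ↔
      ∃ k < w.length, w.take (k + 1) = w.drop (w.length - (k + 1)) ∧
        waitTime w ξ = (n + (k + 1) : ℕ) ∧
        window ξ (n + (k + 1)) (w.length - (k + 1)) = w.drop (k + 1) := by
  constructor
  · rintro ⟨hlt, hwin⟩
    have hle : waitTime w ξ ≤ (n + w.length : ℕ) :=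
      waitTime_le_natCast_iff.2 ⟨_, le_rfl, by omega, by rwa [Nat.add_sub_cancel]⟩
    obtain ⟨m, hm⟩ := waitTime_eq_top_or_natCast.resolve_left
      (ne_top_of_le_ne_top (natCast_ne_top _) hle)
    have hend := (waitTime_eq_natCast_iff.1 hm).1
    have := hend.1
    rw [hm] at hlt hle
    norm_cast at hlt hle
    refine ⟨m - n - 1, by omega, ?_, by rw [hm]; congr 1; omega, ?_⟩
    · calc w.take (m - n - 1 + 1) = (window ξ n w.length).take (m - n - 1 + 1) := by rw [hwin]
        _ = (window ξ (m - w.length) w.length).drop (w.length - (m - n - 1 + 1)) := by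
          rw [take_window _ _ _ _ (by omega), drop_window]
          exact congrArg₂ (window ξ) (by omega) (by omega)
        _ = w.drop (w.length - (m - n - 1 + 1)) := by rw [hend.2]
    · rw [← drop_window, hwin]
  · rintro ⟨k, hk, hov, hT, htail⟩
    have hend := (waitTime_eq_natCast_iff.1 hT).1
    have := hend.1
    refine ⟨by rw [hT]; exact_mod_cast (by omega : n < n + (k + 1)), ?_⟩
    calc window ξ n w.length
        = window ξ n (k + 1) ++ window ξ (n + (k + 1)) (w.length - (k + 1)) := by
          rw [← window_add]; congr 1; omega
      _ = (window ξ (n + (k + 1) - w.length) w.length).drop (w.length - (k + 1)) ++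
          w.drop (k + 1) := by
          rw [drop_window, htail]
          congr 1
          exact congrArg₂ (window ξ) (by omega) (by omega)
      _ = w := by rw [hend.2, ← hov, List.take_append_drop]

lemma IsBernoulli.measure_natCast_lt_waitTime [NeZero r] (hμ : IsBernoulli p μ)
    (hp0 : ∀ x, p x ≠ 0) (hp : ∀ x, p x ≠ ⊤) (n : ℕ) :
    μ {ξ | (n : ℝ≥0∞) < waitTime w ξ} = ∑ k ∈ Finset.range w.length,
      μ {ξ | waitTime w ξ = (n + (k + 1) : ℕ)} * overlapWeight p w (k + 1) := by
  classical
  set K := (Finset.range w.length).filter fun k => w.take (k + 1) = w.drop (w.length - (k + 1))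
  set E : ℕ → Set (ℕ → Fin r) := fun k => {ξ | waitTime w ξ = (n + (k + 1) : ℕ)}
  have hset : {ξ | (n : ℝ≥0∞) < waitTime w ξ} ∩ {ξ | window ξ n w.length = w} =
      ⋃ k ∈ K, E k ∩ {ξ | window ξ (n + (k + 1)) (w.drop (k + 1)).length = w.drop (k + 1)} := by
    ext ξ
    simp only [Set.mem_inter_iff, Set.mem_ofPred_eq, Set.mem_iUnion, exists_prop, K, E,
      Finset.mem_filter, Finset.mem_range, List.length_drop, and_assoc]
    exact lt_waitTime_and_window_eq_iff
  refine (ENNReal.mul_left_inj (pword_ne_zero hp0 w) (pword_ne_top hp w)).1 ?_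
  rw [← hμ.measure_inter_window (A := {ξ | (n : ℝ≥0∞) < waitTime w ξ})
    (dependsOn_natCast_lt_waitTime w n), hset,
    measure_biUnion_finset, Finset.sum_mul, Finset.sum_filter]
  · refine Finset.sum_congr rfl fun k _ => ?_
    rw [mul_assoc, mul_comm (overlapWeight p w _), pword_mul_overlapWeight w hp0 hp]
    split_ifs
    · exact hμ.measure_inter_window (A := E k) (dependsOn_waitTime_eq_natCast w _) _
    · rw [mul_zero]
  · refine fun k _ l _ hkl => Set.disjoint_left.2 fun ξ hk hl => hkl ?_
    have := hk.1.symm.trans hl.1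
    norm_cast at this
    omega
  · exact fun k _ => (measurableSet_of_dependsOn (dependsOn_waitTime_eq_natCast w _)).inter
      (measurableSet_of_dependsOn (dependsOn_window_eq _ _ _))

end Renewal

section Conway
variable {r : ℕ} {p : Fin r → ℝ≥0∞} {μ : Measure (ℕ → Fin r)} {w : List (Fin r)}

lemma setOf_waitTime_ne_top_eq_iUnion {s : ℕ} (hs : s ≤ w.length) :
    {ξ | waitTime w ξ ≠ ⊤} = ⋃ n : ℕ, {ξ | waitTime w ξ = (n + s : ℕ)} := by
  ext ξ
  simp only [Set.mem_ofPred_eq, Set.mem_iUnion]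
  constructor
  · intro h
    obtain ⟨m, hm⟩ := waitTime_eq_top_or_natCast.resolve_left h
    have := (waitTime_eq_natCast_iff.1 hm).1.1
    exact ⟨m - s, by rw [hm]; congr 1; omega⟩
  · rintro ⟨n, hn⟩
    rw [hn]
    exact natCast_ne_top _

lemma measurableSet_waitTime_ne_top : MeasurableSet {ξ | waitTime w ξ ≠ ⊤} := by
  rw [setOf_waitTime_ne_top_eq_iUnion (Nat.zero_le _)]
  exact .iUnion fun n => measurableSet_of_dependsOn (dependsOn_waitTime_eq_natCast w _)

lemma tsum_measure_waitTime_eq_add {s : ℕ} (hs : s ≤ w.length) :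
    ∑' n : ℕ, μ {ξ | waitTime w ξ = (n + s : ℕ)} = μ {ξ | waitTime w ξ ≠ ⊤} := by
  rw [setOf_waitTime_ne_top_eq_iUnion hs, measure_iUnion]
  · refine fun a b hab => Set.disjoint_left.2 fun ξ ha hb => hab ?_
    have := ha.symm.trans hb
    norm_cast at this
    omega
  · exact fun n => measurableSet_of_dependsOn (dependsOn_waitTime_eq_natCast w _)

lemma Ew_eq_tsum (μ : Measure (ℕ → Fin r)) (w : List (Fin r)) :
    Ew μ w = ∑' n : ℕ, μ {ξ | (n : ℝ≥0∞) < waitTime w ξ} :=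
  lintegral_eq_tsum_measure_natCast_lt μ (fun _ => waitTime_eq_top_or_natCast)
    fun n => measurableSet_of_dependsOn (dependsOn_natCast_lt_waitTime w n)

variable [NeZero r]

lemma IsBernoulli.Ew_eq_measure_mul_overlapSum (hμ : IsBernoulli p μ) (hp0 : ∀ x, p x ≠ 0)
    (hp : ∀ x, p x ≠ ⊤) : Ew μ w = μ {ξ | waitTime w ξ ≠ ⊤} * overlapSum p w := by
  simp_rw [Ew_eq_tsum, hμ.measure_natCast_lt_waitTime hp0 hp]
  rw [Summable.tsum_finsetSum fun _ _ => ENNReal.summable, overlapSum, Finset.mul_sum]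
  refine Finset.sum_congr rfl fun k hk => ?_
  rw [ENNReal.tsum_mul_right, tsum_measure_waitTime_eq_add (Finset.mem_range.1 hk)]

theorem IsBernoulli.Ew_eq_overlapSum (hμ : IsBernoulli p μ) (hp0 : ∀ x, p x ≠ 0)
    (hp : ∀ x, p x ≠ ⊤) : Ew μ w = overlapSum p w := by
  have := hμ.isProbabilityMeasure
  have hE := hμ.Ew_eq_measure_mul_overlapSum (w := w) hp0 hp
  have hnull : μ {ξ | waitTime w ξ = ⊤} = 0 := by
    by_contra h
    have htop : Ew μ w = ⊤ := by
      refine eq_top_iff.2 ((ENNReal.tsum_const_eq_top_of_ne_zero (α := ℕ) h).symm.le.trans ?_)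
      rw [Ew_eq_tsum]
      exact ENNReal.tsum_le_tsum fun n => measure_mono fun ξ (hξ : _ = ⊤) => by
        simp [Set.mem_ofPred_eq, hξ]
    refine overlapSum_ne_top w hp0 (top_le_iff.1 ?_)
    calc ⊤ = Ew μ w := htop.symm
      _ ≤ 1 * overlapSum p w := by rw [hE]; gcongr; exact prob_le_one
      _ = overlapSum p w := one_mul _
  have hone : μ {ξ | waitTime w ξ ≠ ⊤} = 1 := by
    rw [← prob_compl_eq_zero_iff measurableSet_waitTime_ne_top]
    simpa [Set.compl_ofPred] using hnull
  rw [hE, hone, one_mul]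

end Conway

section Recurrence
variable {r : ℕ} {p : Fin r → ℝ≥0∞} (w : List (Fin r))

lemma sum_mul_overlapWeight_append_singleton (hp0 : ∀ x, p x ≠ 0) (hp : ∀ x, p x ≠ ⊤)
    {k : ℕ} (hk : k < w.length) :
    ∑ y, p y * overlapWeight p (w ++ [y]) (k + 1) = overlapWeight p w k := by
  classical
  have htake : w.take (k + 1) = w.take k ++ [w[k]] := by
    rw [List.take_add_one, List.getElem?_eq_getElem hk, Option.toList_some]
  have hcond : ∀ y, (w ++ [y]).take (k + 1) = (w ++ [y]).drop ((w ++ [y]).length - (k + 1)) ↔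
      w.take k = w.drop (w.length - k) ∧ w[k] = y := by
    intro y
    rw [List.take_append_of_le_length (by omega), List.length_append, List.length_singleton,
      List.drop_append_of_le_length (by omega), show w.length + 1 - (k + 1) = w.length - k by omega,
      htake]
    constructor
    · intro h
      obtain ⟨h1, h2⟩ := List.append_inj' h rfl
      exact ⟨h1, List.singleton_inj.1 h2⟩
    · rintro ⟨h1, rfl⟩
      rw [h1]
  simp only [overlapWeight]
  simp only [hcond]
  by_cases hov : w.take k = w.drop (w.length - k)
  · simp only [and_iff_right hov, mul_ite, mul_zero]
    rw [if_pos hov, Finset.sum_ite_eq, if_pos (Finset.mem_univ _),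
      List.take_append_of_le_length (by omega), htake, mul_inv_pword_append_singleton hp0 hp]
  · simp [hov]

lemma sum_range_overlapWeight_add_inv_pword :
    ∑ k ∈ Finset.range w.length, overlapWeight p w k + (pword p w)⁻¹ = overlapSum p w + 1 := by
  rw [← overlapWeight_length, ← Finset.sum_range_succ, Finset.sum_range_succ', overlapWeight_zero,
    overlapSum]

theorem sum_mul_overlapSum_append_singleton [NeZero r] (hp0 : ∀ x, p x ≠ 0)
    (hp : ∀ x, p x ≠ ⊤) :
    ∑ y, p y * overlapSum p (w ++ [y]) =
      overlapSum p w + 1 + ((r : ℝ≥0∞) - 1) * (pword p w)⁻¹ := by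
  have hsplit : ∀ y, overlapSum p (w ++ [y]) = ∑ k ∈ Finset.range w.length,
      overlapWeight p (w ++ [y]) (k + 1) + (pword p (w ++ [y]))⁻¹ := fun y => by
    have hlen : (w ++ [y]).length = w.length + 1 := by simp
    rw [overlapSum, hlen, Finset.sum_range_succ, ← hlen, overlapWeight_length]
  have hlhs : ∑ y, p y * overlapSum p (w ++ [y]) =
      ∑ k ∈ Finset.range w.length, overlapWeight p w k + r * (pword p w)⁻¹ := by
    simp only [hsplit, mul_add, Finset.sum_add_distrib, Finset.mul_sum]
    rw [Finset.sum_comm, Finset.sum_congr rfl fun k hk =>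
        sum_mul_overlapWeight_append_singleton w hp0 hp (Finset.mem_range.1 hk),
      Finset.sum_congr rfl fun y _ => mul_inv_pword_append_singleton hp0 hp w y]
    simp
  have hr : ((r : ℝ≥0∞) - 1) * (pword p w)⁻¹ + (pword p w)⁻¹ = r * (pword p w)⁻¹ := by
    rw [← add_one_mul, tsub_add_cancel_of_le (by exact_mod_cast NeZero.one_le)]
  rw [← ENNReal.add_left_inj (ENNReal.inv_ne_top.2 (pword_ne_zero hp0 w)), add_assoc _ (_ * _),
    hr, hlhs, ← sum_range_overlapWeight_add_inv_pword, add_right_comm]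

end Recurrence

theorem statement_13_general {r : ℕ} (p : Fin r → ℝ≥0∞)
    (hp1 : ∑ x, p x = 1) (hpos : ∀ x, 0 < p x)
    (μ : Measure (ℕ → Fin r))
    (hiid : ∀ (m : ℕ) (f : ℕ → Fin r),
      μ {ξ | ∀ i < m, ξ i = f i} = ∏ i ∈ Finset.range m, p (f i))
    (w : List (Fin r)) :
    ∑ y, p y * Ew μ (w ++ [y]) = Ew μ w + 1 + ((r : ℝ≥0∞) - 1) * (pword p w)⁻¹ := by
  have : NeZero r := ⟨by rintro rfl; simp at hp1⟩
  have hp0 : ∀ x, p x ≠ 0 := fun x => (hpos x).ne'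
  have hp : ∀ x, p x ≠ ⊤ := fun x => ne_top_of_le_ne_top one_ne_top
    (hp1 ▸ Finset.single_le_sum (fun _ _ => zero_le) (Finset.mem_univ x))
  have hμ : IsBernoulli p μ := hiid
  simp only [hμ.Ew_eq_overlapSum hp0 hp]
  exact sum_mul_overlapSum_append_singleton w hp0 hp

theorem statement_13 {r : ℕ} (hr : 2 ≤ r) (p : Fin r → ℝ≥0∞)
    (hp1 : ∑ x, p x = 1) (hpos : ∀ x, 0 < p x)
    (μ : Measure (ℕ → Fin r)) [IsProbabilityMeasure μ]
    (hiid : ∀ (m : ℕ) (f : ℕ → Fin r),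
      μ {ξ | ∀ i < m, ξ i = f i} = ∏ i ∈ Finset.range m, p (f i))
    (w : List (Fin r)) :
    ∑ y, p y * Ew μ (w ++ [y]) = Ew μ w + 1 + ((r : ℝ≥0∞) - 1) * (pword p w)⁻¹ :=
  statement_13_general p hp1 hpos μ hiid w
end
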